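/- Let A be an invertible n×n real matrix and 1 < p < ∞. If w_0 ∈ 𝒜_{A,1} and w_1 ∈ 𝒜_{A^{−1},1}, then the weight w := w_0 w_1^{1−p} belongs to 𝒜_{A,p}. -/

import Mathlib

open MeasureTheory Set ENNReal

namespace Paper

/-- An axis-parallel (half-open) cube in `ℝⁿ`. -/
structure Cube (n : ℕ) where
  corner : Fin n → ℝ
  side : ℝ
  side_pos : 0 < side

namespace Cube

variable {n : ℕ}

/-- The underlying set of a cube. -/
def set (Q : Cube n) : Set (Fin n → ℝ) :=
  {x | ∀ i, Q.corner i ≤ x i ∧ x i < Q.corner i + Q.side}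

/-- The volume `|Q| = side ^ n` of a cube. -/
noncomputable def vol (Q : Cube n) : ℝ := Q.side ^ n

/-- The concentric dilate `λQ` of a cube (same center, side multiplied by `l > 0`). -/
noncomputable def dilate (Q : Cube n) (l : ℝ) (hl : 0 < l) : Cube n :=
  ⟨fun i => Q.corner i + Q.side / 2 - l * Q.side / 2, l * Q.side, mul_pos hl Q.side_pos⟩

/-- The concentric triple `3Q` of a cube. -/
noncomputable def tri (Q : Cube n) : Cube n :=
  ⟨fun i => Q.corner i - Q.side, 3 * Q.side, by have := Q.side_pos; linarith⟩

end Cube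

variable {n : ℕ}

/-- The conjugate exponent `p' = p/(p-1)`. -/
noncomputable def conj (p : ℝ) : ℝ := p / (p - 1)

/-- The Euclidean length of a vector of `Fin n → ℝ`. -/
noncomputable def elen (x : Fin n → ℝ) : ℝ := Real.sqrt (∑ i, x i ^ 2)

/-- The (extended-real valued) weighted norm `‖f‖_{L^p(u)} = (∫ |f|^p u)^{1/p}`. -/
noncomputable def lpNorm (p : ℝ) (u f : (Fin n → ℝ) → ℝ) : ℝ≥0∞ :=
  (∫⁻ x, ENNReal.ofReal (|f x| ^ p * u x)) ^ (1 / p)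

/-- Membership `f ∈ L^p(u)` for a weight `u`. -/
def MemLpW (p : ℝ) (u f : (Fin n → ℝ) → ℝ) : Prop :=
  Measurable f ∧ lpNorm p u f < ⊤

/-- The fractional maximal operator
`M_α f(x) = sup_{Q ∋ x} |Q|^{α/n-1} ∫_Q |f|`. -/
noncomputable def frMax (α : ℝ) (f : (Fin n → ℝ) → ℝ) (x : Fin n → ℝ) : ℝ≥0∞ :=
  ⨆ Q : {Q : Cube n // x ∈ Q.set},
    ENNReal.ofReal (Q.1.vol ^ (α / n - 1)) * ∫⁻ y in Q.1.set, ENNReal.ofReal |f y|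

/-- The maximal operator `M_{α,s} f(x) = sup_{Q ∋ x} |Q|^{α/n} ((1/|Q|)∫_Q |f|^s)^{1/s}`. -/
noncomputable def frMaxS (α s : ℝ) (f : (Fin n → ℝ) → ℝ) (x : Fin n → ℝ) : ℝ≥0∞ :=
  ⨆ Q : {Q : Cube n // x ∈ Q.set},
    ENNReal.ofReal (Q.1.vol ^ (α / n)) *
      ((ENNReal.ofReal Q.1.vol)⁻¹ * ∫⁻ y in Q.1.set, ENNReal.ofReal (|f y| ^ s)) ^ (1 / s)

/-- The quantity whose supremum over all cubes is `[w]_{𝒜_{A,p,q}}`; for `p = 1`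
the second factor is `‖w⁻¹‖_{L^∞(Q)}`. -/
noncomputable def apqE (A : Matrix (Fin n) (Fin n) ℝ) (p q : ℝ)
    (w : (Fin n → ℝ) → ℝ) (Q : Cube n) : ℝ≥0∞ :=
  ((ENNReal.ofReal Q.vol)⁻¹ * ∫⁻ x in Q.set, ENNReal.ofReal (w (A.mulVec x)) ^ q) ^ (1 / q) *
    (if p = 1 then essSup (fun x => (ENNReal.ofReal (w x))⁻¹) (volume.restrict Q.set)
     else ((ENNReal.ofReal Q.vol)⁻¹ *
        ∫⁻ x in Q.set, ENNReal.ofReal (w x) ^ (-conj p)) ^ (1 / conj p))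

/-- The constant `[w]_{𝒜_{A,p,q}}`. -/
noncomputable def apqConst (A : Matrix (Fin n) (Fin n) ℝ) (p q : ℝ)
    (w : (Fin n → ℝ) → ℝ) : ℝ≥0∞ :=
  ⨆ Q : Cube n, apqE A p q w Q

/-- Membership in the class `𝒜_{A,p,q}`. -/
def MemApq (A : Matrix (Fin n) (Fin n) ℝ) (p q : ℝ) (w : (Fin n → ℝ) → ℝ) : Prop :=
  apqConst A p q w < ⊤

/-- The quantity whose supremum over all cubes is `[w]_{𝒜_{A,p}}`; for `p = 1` the
second factor is `‖w⁻¹‖_{L^∞(Q)}`. -/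
noncomputable def apE (A : Matrix (Fin n) (Fin n) ℝ) (p : ℝ)
    (w : (Fin n → ℝ) → ℝ) (Q : Cube n) : ℝ≥0∞ :=
  ((ENNReal.ofReal Q.vol)⁻¹ * ∫⁻ x in Q.set, ENNReal.ofReal (w (A.mulVec x))) *
    (if p = 1 then essSup (fun x => (ENNReal.ofReal (w x))⁻¹) (volume.restrict Q.set)
     else ((ENNReal.ofReal Q.vol)⁻¹ *
        ∫⁻ x in Q.set, ENNReal.ofReal (w x) ^ (1 - conj p)) ^ (p - 1))

/-- The constant `[w]_{𝒜_{A,p}}`. -/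
noncomputable def apConst (A : Matrix (Fin n) (Fin n) ℝ) (p : ℝ)
    (w : (Fin n → ℝ) → ℝ) : ℝ≥0∞ :=
  ⨆ Q : Cube n, apE A p w Q

/-- Membership in the class `𝒜_{A,p}`. -/
def MemAp (A : Matrix (Fin n) (Fin n) ℝ) (p : ℝ) (w : (Fin n → ℝ) → ℝ) : Prop :=
  apConst A p w < ⊤

/-- The quantity `v(Q)^{-1/p} (∫_Q M_α(χ_Q v)^q u)^{1/q}` whose supremum over all
cubes is the Sawyer testing constant `[u,v]_{ℳ_{α,p,q}}`. -/
noncomputable def sawyerE (α p q : ℝ) (u v : (Fin n → ℝ) → ℝ) (Q : Cube n) : ℝ≥0∞ :=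
  ((∫⁻ x in Q.set, ENNReal.ofReal (v x)) ^ (1 / p))⁻¹ *
    (∫⁻ x in Q.set, (frMax α (Q.set.indicator v) x) ^ q * ENNReal.ofReal (u x)) ^ (1 / q)

/-- The Sawyer testing constant `[u,v]_{ℳ_{α,p,q}}`. -/
noncomputable def sawyerConst (α p q : ℝ) (u v : (Fin n → ℝ) → ℝ) : ℝ≥0∞ :=
  ⨆ Q : Cube n, sawyerE α p q u v Q

/-- Membership of a pair of weights in the Sawyer class `ℳ_{α,p,q}`. -/
def MemSawyer (α p q : ℝ) (u v : (Fin n → ℝ) → ℝ) : Prop :=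
  sawyerConst α p q u v < ⊤

/-- The averaged norm `‖g‖_{r,|x|∼t}` over the annulus `t < |x| ≤ 2t`
(essential supremum when `r = ∞`). -/
noncomputable def annNorm (r : ℝ≥0∞) (g : (Fin n → ℝ) → ℝ) (t : ℝ) : ℝ≥0∞ :=
  if r = ⊤ then
    essSup (fun x => ENNReal.ofReal |g x|)
      (volume.restrict {x | t < elen x ∧ elen x ≤ 2 * t})
  else
    ((volume {x : Fin n → ℝ | elen x < 2 * t})⁻¹ *
      ∫⁻ x in {x | t < elen x ∧ elen x ≤ 2 * t}, ENNReal.ofReal (|g x| ^ r.toReal)) ^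
        (1 / r.toReal)

/-- The fractional size condition `K ∈ S_{β,r}`. -/
def SizeCond (β : ℝ) (r : ℝ≥0∞) (K : (Fin n → ℝ) → ℝ) : Prop :=
  ∃ C : ℝ, 0 < C ∧ ∀ t : ℝ, 0 < t →
    annNorm r K t ≤ ENNReal.ofReal (C * t ^ (β - n))

/-- The generalized fractional Hörmander condition `K ∈ H_{β,r}`. -/
def HormCond (β : ℝ) (r : ℝ≥0∞) (K : (Fin n → ℝ) → ℝ) : Prop :=
  ∃ c : ℝ, 1 < c ∧ ∃ C : ℝ, 0 < C ∧ ∀ x : Fin n → ℝ, ∀ R : ℝ, c * elen x < R →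
    (∑' m : ℕ, ENNReal.ofReal (((2 : ℝ) ^ (m + 1) * R) ^ ((n : ℝ) - β)) *
      annNorm r (fun y => K (y - x) - K y) (2 ^ (m + 1) * R)) ≤ ENNReal.ofReal C

/-- The integral operator `T_{α,m} f(x) = ∫ k_1(x-A_1y) ⋯ k_m(x-A_my) f(y) dy`. -/
noncomputable def intOp (m : ℕ) (k : Fin m → (Fin n → ℝ) → ℝ)
    (A : Fin m → Matrix (Fin n) (Fin n) ℝ) (f : (Fin n → ℝ) → ℝ) (x : Fin n → ℝ) : ℝ :=
  ∫ y, (∏ i, k i (x - (A i).mulVec y)) * f y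

/-- Hypothesis (H): the matrices `A i` and `A i - A j` (`i ≠ j`) are invertible. -/
def HypH (m : ℕ) (A : Fin m → Matrix (Fin n) (Fin n) ℝ) : Prop :=
  (∀ i, (A i).det ≠ 0) ∧ ∀ i j, i ≠ j → (A i - A j).det ≠ 0

/-- `T` is of strong type `(p,p)` (with respect to Lebesgue measure). -/
def StrongType (p : ℝ) (T : ((Fin n → ℝ) → ℝ) → (Fin n → ℝ) → ℝ) : Prop :=
  ∃ C : ℝ, 0 < C ∧ ∀ f : (Fin n → ℝ) → ℝ, Measurable f →
    lpNorm p (fun _ => 1) (T f) ≤ ENNReal.ofReal C * lpNorm p (fun _ => 1) f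

/-- Bounded, measurable and compactly supported functions. -/
def BddCompactSupp (f : (Fin n → ℝ) → ℝ) : Prop :=
  Measurable f ∧ (∃ M : ℝ, ∀ x, |f x| ≤ M) ∧ HasCompactSupport f

/-- A dyadic lattice: any two cubes are nested or disjoint, every cube is the union of
its children (the cubes of the family of half its side length contained in it), and
every cube has a parent of twice its side length. -/
def IsDyadicLattice (𝒟 : Set (Cube n)) : Prop :=
  (∀ Q ∈ 𝒟, ∀ Q' ∈ 𝒟, Q.set ⊆ Q'.set ∨ Q'.set ⊆ Q.set ∨ Disjoint Q.set Q'.set) ∧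
  (∀ Q ∈ 𝒟, (⋃ P ∈ {P | P ∈ 𝒟 ∧ P.side = Q.side / 2 ∧ P.set ⊆ Q.set}, P.set) = Q.set) ∧
  (∀ Q ∈ 𝒟, ∃ Q' ∈ 𝒟, Q'.side = 2 * Q.side ∧ Q.set ⊆ Q'.set)

/-- An `η`-sparse family of cubes. -/
def IsSparse (η : ℝ) (𝒮 : Set (Cube n)) : Prop :=
  ∃ E : Cube n → Set (Fin n → ℝ),
    (∀ Q ∈ 𝒮, E Q ⊆ Q.set ∧ MeasurableSet (E Q) ∧ ENNReal.ofReal (η * Q.vol) ≤ volume (E Q)) ∧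
    𝒮.PairwiseDisjoint E

/-- The sparse operator `𝒜_{α,s,𝒮} f(x) = Σ_{Q ∈ 𝒮} |Q|^{α/n} (avg_Q |f|^s)^{1/s} χ_Q(x)`. -/
noncomputable def sparseOp (α s : ℝ) (𝒮 : Set (Cube n)) (f : (Fin n → ℝ) → ℝ)
    (x : Fin n → ℝ) : ℝ≥0∞ :=
  ∑' Q : 𝒮, Set.indicator (Q : Cube n).set
    (fun _ => ENNReal.ofReal ((Q : Cube n).vol ^ (α / n)) *
      ((ENNReal.ofReal (Q : Cube n).vol)⁻¹ *
        ∫⁻ y in (Q : Cube n).set, ENNReal.ofReal (|f y| ^ s)) ^ (1 / s)) x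

/-- The quantity whose sup over `R ∈ 𝒟` is the outer testing constant `𝒯_{A,r,out,𝒟}`. -/
noncomputable def testOutE (α p q r : ℝ) (𝒟 : Set (Cube n))
    (A : Matrix (Fin n) (Fin n) ℝ) (u v : (Fin n → ℝ) → ℝ) (R : Cube n) : ℝ≥0∞ :=
  ((∫⁻ x in R.set, ENNReal.ofReal (v x)) ^ (1 / p))⁻¹ *
    (∫⁻ x, (∑' Q : {Q : Cube n // Q ∈ 𝒟 ∧ R.set ⊆ Q.set},
        Set.indicator Q.1.set (fun _ =>
          ENNReal.ofReal (Q.1.vol ^ (α / n - 1 / r)) *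
            (∫⁻ y in Q.1.set, ENNReal.ofReal (R.set.indicator v y)) ^ (1 / r)) x) ^ q *
      ENNReal.ofReal (u (A.mulVec x))) ^ (1 / q)

/-- The quantity whose sup over `R ∈ 𝒟` is the dual outer testing constant `𝒯*_{A,r,out,𝒟}`. -/
noncomputable def testOutStarE (α p q r : ℝ) (𝒟 : Set (Cube n))
    (A : Matrix (Fin n) (Fin n) ℝ) (u v : (Fin n → ℝ) → ℝ) (R : Cube n) : ℝ≥0∞ :=
  ((∫⁻ x in R.set, ENNReal.ofReal (u (A.mulVec x))) ^ (1 / conj q))⁻¹ *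
    (∫⁻ x, (∑' Q : {Q : Cube n // Q ∈ 𝒟 ∧ R.set ⊆ Q.set},
        Set.indicator Q.1.set (fun _ =>
          ENNReal.ofReal (Q.1.vol ^ (α / n - 1 / r)) *
            (∫⁻ y in Q.1.set, ENNReal.ofReal (v y)) ^ (1 / r - 1) *
            (∫⁻ y in Q.1.set, ENNReal.ofReal (R.set.indicator
              (fun z => u (A.mulVec z)) y))) x) ^ conj p *
      ENNReal.ofReal (v x)) ^ (1 / conj p)

/-- The outer testing constant `𝒯_{A,r,out,𝒟}`. -/
noncomputable def testOutConst (α p q r : ℝ) (𝒟 : Set (Cube n))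
    (A : Matrix (Fin n) (Fin n) ℝ) (u v : (Fin n → ℝ) → ℝ) : ℝ≥0∞ :=
  ⨆ R : 𝒟, testOutE α p q r 𝒟 A u v R

/-- The dual outer testing constant `𝒯*_{A,r,out,𝒟}`. -/
noncomputable def testOutStarConst (α p q r : ℝ) (𝒟 : Set (Cube n))
    (A : Matrix (Fin n) (Fin n) ℝ) (u v : (Fin n → ℝ) → ℝ) : ℝ≥0∞ :=
  ⨆ R : 𝒟, testOutStarE α p q r 𝒟 A u v R

/-- The grand maximal truncated operator `M_T` (for `m = 2`). -/
noncomputable def grandMax (T : ((Fin n → ℝ) → ℝ) → (Fin n → ℝ) → ℝ)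
    (A1 A2 : Matrix (Fin n) (Fin n) ℝ) (f : (Fin n → ℝ) → ℝ) (x : Fin n → ℝ) : ℝ≥0∞ :=
  ⨆ P : {P : Cube n × Cube n // A1⁻¹.mulVec x ∈ P.1.set ∧ A2⁻¹.mulVec x ∈ P.2.set},
    essSup (fun ξ => ENNReal.ofReal
        |T (Set.indicator ((P.1.1.tri.set ∪ P.1.2.tri.set)ᶜ) f) ξ|)
      (volume.restrict (P.1.1.set ∪ P.1.2.set))

/-- The local grand maximal truncated operator `M_{T,Q₀¹∪Q₀²}` (for `m = 2`). -/
noncomputable def locGrandMax (T : ((Fin n → ℝ) → ℝ) → (Fin n → ℝ) → ℝ)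
    (A1 A2 : Matrix (Fin n) (Fin n) ℝ) (Q01 Q02 : Cube n)
    (f : (Fin n → ℝ) → ℝ) (x : Fin n → ℝ) : ℝ≥0∞ :=
  ⨆ P : {P : Cube n × Cube n // (A1⁻¹.mulVec x ∈ P.1.set ∧ Q01.set ⊆ P.1.set) ∧
      (A2⁻¹.mulVec x ∈ P.2.set ∧ Q02.set ⊆ P.2.set)},
    essSup (fun ξ => ENNReal.ofReal
        |T (Set.indicator ((Q01.tri.set ∪ Q02.tri.set) \ (P.1.1.tri.set ∪ P.1.2.tri.set)) f) ξ|)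
      (volume.restrict (P.1.1.set ∪ P.1.2.set))

/-!
Write `w = w₀ w₁^{1-p}`, let `Q'` be a cube containing `AQ` with `|Q'| = c|Q|`, and put
`S₀ = ‖w₀⁻¹‖_{L^∞(Q)}`, `S₁ = ‖w₁⁻¹‖_{L^∞(Q')}`. On `Q` we have `w(Ax) ≤ S₁^{p-1} w₀(Ax)`, and,
as `(1-p)(1-p') = 1`, `w^{1-p'} = w₀^{1-p'} w₁ ≤ S₀^{p'-1} w₁`. Since `(p'-1)(p-1) = 1` this gives
`(⨍_Q w∘A)(⨍_Q w^{1-p'})^{p-1} ≤ (S₀ ⨍_Q w₀∘A) (S₁ ⨍_Q w₁)^{p-1}`. The first factor is at most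
`[w₀]_{𝒜_{A,1}}`; the substitution `y = Ax` bounds `⨍_Q w₁` by `c |det A|⁻¹ ⨍_{Q'} w₁∘A⁻¹`,
so the second is at most `(c |det A|⁻¹ [w₁]_{𝒜_{A⁻¹,1}})^{p-1}`.

The pointwise bound for `w^{1-p'}` needs `w₁ > 0` a.e. A weight of `𝒜_{A,1}` that vanishes on
a non-null part of a cube has infinite `L^∞` norm of its inverse there, so it vanishes a.e. on the
image of every larger cube; as these exhaust `ℝⁿ`, it is either positive a.e. or zero a.e.
-/

open Matrix

section LinearChangeOfVariables

variable {A : Matrix (Fin n) (Fin n) ℝ}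

theorem mulVec_nonsing_inv_mulVec (hA : A.det ≠ 0) (x : Fin n → ℝ) :
    A *ᵥ (A⁻¹ *ᵥ x) = x := by
  rw [mulVec_mulVec, mul_nonsing_inv _ hA.isUnit, one_mulVec]

theorem nonsing_inv_mulVec_mulVec (hA : A.det ≠ 0) (x : Fin n → ℝ) :
    A⁻¹ *ᵥ (A *ᵥ x) = x := by
  rw [mulVec_mulVec, nonsing_inv_mul _ hA.isUnit, one_mulVec]

theorem det_nonsing_inv_ne_zero (hA : A.det ≠ 0) : A⁻¹.det ≠ 0 :=
  (isUnit_nonsing_inv_det A hA.isUnit).ne_zero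

theorem quasiMeasurePreserving_mulVec (hA : A.det ≠ 0) :
    Measure.QuasiMeasurePreserving A.mulVec volume volume := by
  simpa [toLin'_apply', coe_mulVecLin] using
    Measure.LinearMap.quasiMeasurePreserving volume (toLin' A) (by rwa [LinearMap.det_toLin'])

theorem setLIntegral_image_mulVec (hA : A.det ≠ 0) {s : Set (Fin n → ℝ)} (hs : MeasurableSet s)
    (g : (Fin n → ℝ) → ℝ≥0∞) :
    ∫⁻ y in A.mulVec '' s, g y = ENNReal.ofReal |A.det| * ∫⁻ x in s, g (A *ᵥ x) := by
  set L := LinearMap.toContinuousLinearMap (toLin' A)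
  have hL : ⇑L = A.mulVec := funext fun x => by simp [L]
  have hinj : Function.Injective A.mulVec := mulVec_injective_iff_isUnit.mpr
    ((isUnit_iff_isUnit_det A).mpr hA.isUnit)
  rw [← hL, lintegral_image_eq_lintegral_abs_det_fderiv_mul volume hs
    (fun x _ => L.hasFDerivWithinAt) (hL ▸ hinj.injOn), lintegral_const_mul' _ _ ofReal_ne_top]
  simp [L, LinearMap.det_toLin']

end LinearChangeOfVariables

namespace Cube

theorem set_eq_pi (Q : Cube n) :
    Q.set = univ.pi fun i => Ico (Q.corner i) (Q.corner i + Q.side) := by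
  ext x
  simp [Cube.set]

theorem measurableSet_set (Q : Cube n) : MeasurableSet Q.set := by
  rw [set_eq_pi]
  exact .univ_pi fun _ => measurableSet_Ico

def zeroCentered (k : ℕ) : Cube n := ⟨fun _ => -(k + 1), 2 * (k + 1), by positivity⟩

theorem zeroCentered_mono : Monotone fun k => (zeroCentered k : Cube n).set := by
  intro k l hkl x hx i
  have : (k : ℝ) ≤ l := by exact_mod_cast hkl
  have := hx i
  simp only [zeroCentered] at this ⊢
  constructor <;> linarith

theorem iUnion_zeroCentered_add (m : ℕ) : ⋃ k, (zeroCentered (m + k) : Cube n).set = univ := by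
  refine eq_univ_of_forall fun x => mem_iUnion.mpr ⟨⌈‖x‖⌉₊, fun i => ?_⟩
  have hxi : |x i| ≤ ‖x‖ := by simpa using norm_le_pi_norm x i
  have := Nat.le_ceil ‖x‖
  have : (0 : ℝ) ≤ m := m.cast_nonneg
  simp only [zeroCentered, Nat.cast_add]
  constructor <;> linarith [abs_le.mp hxi]

theorem exists_mapsTo_mulVec (A : Matrix (Fin n) (Fin n) ℝ) :
    ∃ c : ℝ, 0 < c ∧ ∀ Q : Cube n, ∃ Q' : Cube n,
      MapsTo A.mulVec Q.set Q'.set ∧ Q'.vol = c * Q.vol := by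
  set L := LinearMap.toContinuousLinearMap (toLin' A)
  set K := ‖L‖ + 1
  have hK : 0 < K := by positivity
  refine ⟨(2 * K) ^ n, by positivity, fun Q => ⟨⟨A *ᵥ Q.corner - fun _ => K * Q.side,
    2 * K * Q.side, by have := Q.side_pos; positivity⟩, fun x hx i => ?_,
    by simp [Cube.vol, mul_pow]⟩⟩
  have hdist : ‖x - Q.corner‖ ≤ Q.side := by
    refine (pi_norm_le_iff_of_nonneg Q.side_pos.le).mpr fun j => ?_
    have := hx j
    rw [Real.norm_eq_abs, abs_le]
    constructor <;> simp only [Pi.sub_apply] <;> linarith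
  have himage : |(A *ᵥ x) i - (A *ᵥ Q.corner) i| ≤ ‖L‖ * Q.side := by
    calc |(A *ᵥ x) i - (A *ᵥ Q.corner) i| = ‖(L (x - Q.corner)) i‖ := by
          simp [L, mulVec_sub]
      _ ≤ ‖L (x - Q.corner)‖ := norm_le_pi_norm _ i
      _ ≤ ‖L‖ * Q.side := L.le_of_opNorm_le_of_le le_rfl hdist
  have := Q.side_pos
  obtain ⟨h1, h2⟩ := abs_le.mp himage
  simp only [Pi.sub_apply]
  constructor <;> nlinarith

end Cube

theorem one_lt_conj {p : ℝ} (hp : 1 < p) : 1 < conj p := by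
  rw [conj, lt_div_iff₀ (by linarith)]
  linarith

theorem conj_sub_one_mul_sub_one {p : ℝ} (hp : 1 < p) : (conj p - 1) * (p - 1) = 1 := by
  rw [conj]
  field_simp [(by linarith : p - 1 ≠ 0)]
  ring

section RpowBounds

variable {α : Type*} [MeasurableSpace α] {μ : Measure α} {e f : ℝ} {S : ℝ≥0∞}

theorem ofReal_mul_rpow_le {a b : ℝ} (he : e < 0) (ha : 0 ≤ a)
    (hb : (ENNReal.ofReal b)⁻¹ ≤ S) :
    ENNReal.ofReal (a * b ^ e) ≤ S ^ (-e) * ENNReal.ofReal a := by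
  rcases le_or_gt b 0 with hb0 | hb0
  · have hS : S = ⊤ := by simpa [ENNReal.ofReal_eq_zero.mpr hb0] using hb
    rcases ha.eq_or_lt with rfl | ha0
    · simp
    · simp [hS, ENNReal.top_rpow_of_pos (neg_pos.mpr he), ha0]
  · calc ENNReal.ofReal (a * b ^ e) = (ENNReal.ofReal b)⁻¹ ^ (-e) * ENNReal.ofReal a := by
          rw [ENNReal.ofReal_mul ha, ← ENNReal.ofReal_rpow_of_pos hb0, ENNReal.inv_rpow,
            ← ENNReal.rpow_neg, neg_neg, mul_comm]
      _ ≤ S ^ (-e) * ENNReal.ofReal a := by gcongr; linarith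

theorem ofReal_mul_rpow_rpow_le {a b : ℝ} (hf : f < 0) (hef : e * f = 1) (ha : 0 ≤ a)
    (hb : 0 < b) (hS : (ENNReal.ofReal a)⁻¹ ≤ S) :
    ENNReal.ofReal (a * b ^ e) ^ f ≤ S ^ (-f) * ENNReal.ofReal b := by
  calc ENNReal.ofReal (a * b ^ e) ^ f = (ENNReal.ofReal a)⁻¹ ^ (-f) * ENNReal.ofReal b := by
        rw [ENNReal.ofReal_mul ha, ENNReal.mul_rpow_of_ne_top ofReal_ne_top ofReal_ne_top,
          ← ENNReal.ofReal_rpow_of_pos hb, ← ENNReal.rpow_mul, hef, ENNReal.rpow_one,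
          ENNReal.inv_rpow, ← ENNReal.rpow_neg, neg_neg]
    _ ≤ S ^ (-f) * ENNReal.ofReal b := by gcongr; linarith

theorem lintegral_ofReal_mul_rpow_le {u v : α → ℝ} (he : e < 0) (hu : ∀ x, 0 ≤ u x)
    (hum : AEMeasurable u μ) (hv : ∀ᵐ x ∂μ, (ENNReal.ofReal (v x))⁻¹ ≤ S) :
    ∫⁻ x, ENNReal.ofReal (u x * v x ^ e) ∂μ ≤ S ^ (-e) * ∫⁻ x, ENNReal.ofReal (u x) ∂μ := by
  calc ∫⁻ x, ENNReal.ofReal (u x * v x ^ e) ∂μ ≤ ∫⁻ x, S ^ (-e) * ENNReal.ofReal (u x) ∂μ :=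
        lintegral_mono_ae (hv.mono fun x hx => ofReal_mul_rpow_le he (hu x) hx)
    _ = S ^ (-e) * ∫⁻ x, ENNReal.ofReal (u x) ∂μ := lintegral_const_mul'' _ hum.ennreal_ofReal

theorem lintegral_ofReal_mul_rpow_rpow_le {u v : α → ℝ} (hf : f < 0) (hef : e * f = 1)
    (hu : ∀ x, 0 ≤ u x) (hS : ∀ᵐ x ∂μ, (ENNReal.ofReal (u x))⁻¹ ≤ S) (hv : ∀ᵐ x ∂μ, 0 < v x)
    (hvm : AEMeasurable v μ) :
    ∫⁻ x, ENNReal.ofReal (u x * v x ^ e) ^ f ∂μ ≤ S ^ (-f) * ∫⁻ x, ENNReal.ofReal (v x) ∂μ := by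
  calc ∫⁻ x, ENNReal.ofReal (u x * v x ^ e) ^ f ∂μ ≤ ∫⁻ x, S ^ (-f) * ENNReal.ofReal (v x) ∂μ :=
        lintegral_mono_ae <| (hS.and hv).mono fun x hx =>
          ofReal_mul_rpow_rpow_le hf hef (hu x) hx.2 hx.1
    _ = S ^ (-f) * ∫⁻ x, ENNReal.ofReal (v x) ∂μ := lintegral_const_mul'' _ hvm.ennreal_ofReal

end RpowBounds

section Weights

variable {A : Matrix (Fin n) (Fin n) ℝ} {w : (Fin n → ℝ) → ℝ}

theorem memAp_of_apE_le {p : ℝ} {C : ℝ≥0∞} (hC : C < ⊤) (h : ∀ Q, apE A p w Q ≤ C) :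
    MemAp A p w :=
  (iSup_le h).trans_lt hC

theorem average_mul_essSup_inv_le_apConst (Q : Cube n) :
    ((ENNReal.ofReal Q.vol)⁻¹ * ∫⁻ x in Q.set, ENNReal.ofReal (w (A *ᵥ x))) *
      essSup (fun x => (ENNReal.ofReal (w x))⁻¹) (volume.restrict Q.set) ≤ apConst A 1 w :=
  (le_of_eq (by rw [apE, if_pos rfl])).trans (le_iSup (apE A 1 w) Q)

theorem apE_eq_zero_of_ae_comp_eq_zero {p : ℝ} (hp : p ≠ 1) (h : ∀ᵐ x, w (A *ᵥ x) = 0)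
    (Q : Cube n) : apE A p w Q = 0 := by
  have hzero : ∫⁻ x in Q.set, ENNReal.ofReal (w (A *ᵥ x)) = 0 := by
    rw [lintegral_congr_ae (g := fun _ => 0)
      (ae_restrict_of_ae (h.mono fun x hx => by simp [hx])), lintegral_zero]
  rw [apE, if_neg hp, hzero, mul_zero, zero_mul]

theorem ae_comp_eq_zero_of_not_ae_ne_zero (hA : A.det ≠ 0) (hw : ∀ x, 0 ≤ w x)
    (hwm : AEMeasurable w) (hmem : MemAp A 1 w) {Q : Cube n}
    (hQ : ¬ ∀ᵐ x ∂volume.restrict Q.set, w x ≠ 0) :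
    ∀ᵐ x ∂volume.restrict Q.set, w (A *ᵥ x) = 0 := by
  have hS : essSup (fun x => (ENNReal.ofReal (w x))⁻¹) (volume.restrict Q.set) = ⊤ := by
    contrapose! hQ
    filter_upwards [ENNReal.ae_le_essSup fun x => (ENNReal.ofReal (w x))⁻¹] with x hx hx0
    simp [hx0, hQ] at hx
  have hint : ∫⁻ x in Q.set, ENNReal.ofReal (w (A *ᵥ x)) = 0 := by
    by_contra hne
    have := (average_mul_essSup_inv_le_apConst Q).trans_lt hmem
    rw [hS, ENNReal.mul_top (mul_ne_zero (ENNReal.inv_ne_zero.mpr ofReal_ne_top) hne)] at this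
    exact this.ne rfl
  have hcomp : AEMeasurable (fun x => w (A *ᵥ x)) (volume.restrict Q.set) :=
    (hwm.comp_quasiMeasurePreserving (quasiMeasurePreserving_mulVec hA)).restrict
  filter_upwards [(lintegral_eq_zero_iff' hcomp.ennreal_ofReal).mp hint] with x hx
  exact le_antisymm (ENNReal.ofReal_eq_zero.mp hx) (hw _)

theorem ae_pos_or_ae_eq_zero_of_memAp_one (hA : A.det ≠ 0) (hw : ∀ x, 0 ≤ w x)
    (hwm : AEMeasurable w) (hmem : MemAp A 1 w) : (∀ᵐ x, 0 < w x) ∨ ∀ᵐ x, w x = 0 := by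
  by_cases hnz : ∀ᵐ x, w x ≠ 0
  · exact .inl (hnz.mono fun x hx => (hw x).lt_of_ne' hx)
  right
  obtain ⟨m, hm⟩ :
      ∃ m, ¬ ∀ᵐ x ∂volume.restrict (Cube.zeroCentered m : Cube n).set, w x ≠ 0 := by
    contrapose! hnz
    rw [← Measure.restrict_univ (μ := volume), ← Cube.iUnion_zeroCentered_add 0,
      ae_restrict_iUnion_iff]
    simpa only [zero_add] using hnz
  have hcomp : ∀ᵐ x, w (A *ᵥ x) = 0 := by
    rw [← Measure.restrict_univ (μ := volume), ← Cube.iUnion_zeroCentered_add m,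
      ae_restrict_iUnion_iff]
    exact fun k => ae_comp_eq_zero_of_not_ae_ne_zero hA hw hwm hmem fun h =>
      hm (ae_restrict_of_ae_restrict_of_subset (Cube.zeroCentered_mono (m.le_add_right k)) h)
  filter_upwards [(quasiMeasurePreserving_mulVec (det_nonsing_inv_ne_zero hA)).ae hcomp]
    with x hx
  rwa [mulVec_nonsing_inv_mulVec hA] at hx

theorem essSup_inv_mul_average_le (hA : A.det ≠ 0) {Q Q' : Cube n} {c : ℝ} (hc : 0 < c)
    (hmaps : MapsTo A.mulVec Q.set Q'.set) (hvol : Q'.vol = c * Q.vol) :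
    essSup (fun x => (ENNReal.ofReal (w x))⁻¹) (volume.restrict Q'.set) *
        ((ENNReal.ofReal Q.vol)⁻¹ * ∫⁻ x in Q.set, ENNReal.ofReal (w x)) ≤
      apConst A⁻¹ 1 w * (ENNReal.ofReal c / ENNReal.ofReal |A.det|) := by
  set S := essSup (fun x => (ENNReal.ofReal (w x))⁻¹) (volume.restrict Q'.set)
  set J := ∫⁻ x in Q.set, ENNReal.ofReal (w x)
  set d := ENNReal.ofReal |A.det|
  have hd : d ≠ 0 := by simpa [d] using hA
  have hcov : d * J ≤ ∫⁻ y in Q'.set, ENNReal.ofReal (w (A⁻¹ *ᵥ y)) :=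
    calc d * J = ∫⁻ y in A.mulVec '' Q.set, ENNReal.ofReal (w (A⁻¹ *ᵥ y)) := by
          simp [setLIntegral_image_mulVec hA Q.measurableSet_set, nonsing_inv_mulVec_mulVec hA,
            d, J]
      _ ≤ _ := lintegral_mono_set hmaps.image_subset
  have hV : (ENNReal.ofReal Q.vol)⁻¹ = ENNReal.ofReal c * (ENNReal.ofReal Q'.vol)⁻¹ := by
    have hc' : ENNReal.ofReal c ≠ 0 := by simpa using hc
    rw [hvol, ENNReal.ofReal_mul hc.le, ENNReal.mul_inv (.inl hc') (.inl ofReal_ne_top),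
      ← mul_assoc, ENNReal.mul_inv_cancel hc' ofReal_ne_top, one_mul]
  calc S * ((ENNReal.ofReal Q.vol)⁻¹ * J)
      = ((ENNReal.ofReal Q'.vol)⁻¹ * (d * J) * S) * (ENNReal.ofReal c / d) := by
        rw [hV, div_eq_mul_inv, ← mul_one (S * _), ← ENNReal.mul_inv_cancel hd ofReal_ne_top]
        ring
    _ ≤ apConst A⁻¹ 1 w * (ENNReal.ofReal c / d) := by
        gcongr
        calc (ENNReal.ofReal Q'.vol)⁻¹ * (d * J) * S
            ≤ (ENNReal.ofReal Q'.vol)⁻¹ * (∫⁻ y in Q'.set, ENNReal.ofReal (w (A⁻¹ *ᵥ y))) * S :=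
              by gcongr
          _ ≤ apConst A⁻¹ 1 w := average_mul_essSup_inv_le_apConst Q'

theorem apE_mul_rpow_le {p : ℝ} (hp : 1 < p) {A : Matrix (Fin n) (Fin n) ℝ} (hA : A.det ≠ 0)
    {w0 w1 : (Fin n → ℝ) → ℝ} (hw0 : ∀ x, 0 ≤ w0 x) (hw0m : AEMeasurable w0)
    (hw1m : AEMeasurable w1) (hw1pos : ∀ᵐ x, 0 < w1 x) {Q Q' : Cube n} {c : ℝ} (hc : 0 < c)
    (hmaps : MapsTo A.mulVec Q.set Q'.set) (hvol : Q'.vol = c * Q.vol) :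
    apE A p (fun x => w0 x * w1 x ^ (1 - p)) Q ≤
      apConst A 1 w0 *
        (apConst A⁻¹ 1 w1 * (ENNReal.ofReal c / ENNReal.ofReal |A.det|)) ^ (p - 1) := by
  set V := ENNReal.ofReal Q.vol
  set S0 := essSup (fun x => (ENNReal.ofReal (w0 x))⁻¹) (volume.restrict Q.set)
  set S1 := essSup (fun x => (ENNReal.ofReal (w1 x))⁻¹) (volume.restrict Q'.set)
  set I0 := ∫⁻ x in Q.set, ENNReal.ofReal (w0 (A *ᵥ x))
  set J1 := ∫⁻ x in Q.set, ENNReal.ofReal (w1 x)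
  have hqmp := quasiMeasurePreserving_mulVec hA
  have hI : ∫⁻ x in Q.set, ENNReal.ofReal (w0 (A *ᵥ x) * w1 (A *ᵥ x) ^ (1 - p)) ≤
      S1 ^ (p - 1) * I0 := by
    simpa only [neg_sub] using lintegral_ofReal_mul_rpow_le (e := 1 - p) (by linarith)
      (fun x => hw0 _) (hw0m.comp_quasiMeasurePreserving hqmp).restrict
      ((hqmp.restrict hmaps).ae (ENNReal.ae_le_essSup fun x => (ENNReal.ofReal (w1 x))⁻¹))
  have hJ : ∫⁻ x in Q.set, ENNReal.ofReal (w0 x * w1 x ^ (1 - p)) ^ (1 - conj p) ≤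
      S0 ^ (conj p - 1) * J1 := by
    simpa only [neg_sub] using lintegral_ofReal_mul_rpow_rpow_le (e := 1 - p) (f := 1 - conj p)
      (by linarith [one_lt_conj hp]) (by linarith [conj_sub_one_mul_sub_one hp]) hw0
      (ENNReal.ae_le_essSup _) (ae_restrict_of_ae hw1pos) hw1m.restrict
  have hp1 : 0 ≤ p - 1 := by linarith
  calc apE A p (fun x => w0 x * w1 x ^ (1 - p)) Q
      = (V⁻¹ * ∫⁻ x in Q.set, ENNReal.ofReal (w0 (A *ᵥ x) * w1 (A *ᵥ x) ^ (1 - p))) *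
          (V⁻¹ * ∫⁻ x in Q.set, ENNReal.ofReal (w0 x * w1 x ^ (1 - p)) ^ (1 - conj p)) ^ (p - 1) :=
        by
        rw [apE, if_neg hp.ne']
    _ ≤ (V⁻¹ * (S1 ^ (p - 1) * I0)) * (V⁻¹ * (S0 ^ (conj p - 1) * J1)) ^ (p - 1) := by
        gcongr
    _ = ((V⁻¹ * I0) * S0) * (S1 * (V⁻¹ * J1)) ^ (p - 1) := by
        have hS0 : (V⁻¹ * (S0 ^ (conj p - 1) * J1)) ^ (p - 1) = S0 * (V⁻¹ * J1) ^ (p - 1) :=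
          by
          rw [mul_left_comm, ENNReal.mul_rpow_of_nonneg _ _ hp1, ← ENNReal.rpow_mul,
            conj_sub_one_mul_sub_one hp, ENNReal.rpow_one]
        rw [hS0, ENNReal.mul_rpow_of_nonneg S1 _ hp1]
        ring
    _ ≤ apConst A 1 w0 *
          (apConst A⁻¹ 1 w1 * (ENNReal.ofReal c / ENNReal.ofReal |A.det|)) ^ (p - 1) :=
        mul_le_mul' (average_mul_essSup_inv_le_apConst Q)
          (ENNReal.rpow_le_rpow (essSup_inv_mul_average_le hA hc hmaps hvol) hp1)

end Weights

theorem memAp_factorization_general (n : ℕ) (p : ℝ) (hp : 1 < p)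
    (A : Matrix (Fin n) (Fin n) ℝ) (hA : A.det ≠ 0)
    (w0 w1 : (Fin n → ℝ) → ℝ)
    (hw0 : ∀ x, 0 ≤ w0 x) (hw0l : LocallyIntegrable w0 volume)
    (hw1 : ∀ x, 0 ≤ w1 x) (hw1l : LocallyIntegrable w1 volume)
    (hmem0 : MemAp A 1 w0) (hmem1 : MemAp A⁻¹ 1 w1) :
    MemAp A p (fun x => w0 x * w1 x ^ (1 - p)) := by
  have hw0m := hw0l.aestronglyMeasurable.aemeasurable
  have hw1m := hw1l.aestronglyMeasurable.aemeasurable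
  rcases ae_pos_or_ae_eq_zero_of_memAp_one (det_nonsing_inv_ne_zero hA) hw1 hw1m hmem1 with
    hw1pos | hw1zero
  · obtain ⟨c, hc, hcover⟩ := Cube.exists_mapsTo_mulVec A
    have hC : apConst A 1 w0 *
        (apConst A⁻¹ 1 w1 * (ENNReal.ofReal c / ENNReal.ofReal |A.det|)) ^ (p - 1) < ⊤ :=
      ENNReal.mul_lt_top hmem0 <| ENNReal.rpow_lt_top_of_nonneg (by linarith) <|
        ENNReal.mul_ne_top hmem1.ne (ENNReal.div_ne_top ofReal_ne_top (by simpa using hA))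
    refine memAp_of_apE_le hC fun Q => ?_
    obtain ⟨Q', hmaps, hvol⟩ := hcover Q
    exact apE_mul_rpow_le hp hA hw0 hw0m hw1m hw1pos hc hmaps hvol
  -- `w₁ = 0` lies in `𝒜_{A⁻¹,1}` since `0 * ∞ = 0`; then `w = 0`, and `0 * ∞ = 0` in `apE` too.
  · have hzero : ∀ᵐ x, w0 (A *ᵥ x) * w1 (A *ᵥ x) ^ (1 - p) = 0 :=
      (quasiMeasurePreserving_mulVec hA).ae (p := fun y => w0 y * w1 y ^ (1 - p) = 0) <|
        hw1zero.mono fun x hx => by simp [hx, Real.zero_rpow (by linarith : 1 - p ≠ 0)]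
    exact memAp_of_apE_le ENNReal.zero_lt_top fun Q =>
      (apE_eq_zero_of_ae_comp_eq_zero hp.ne' hzero Q).le

/-- If `w₀ ∈ 𝒜_{A,1}` and `w₁ ∈ 𝒜_{A⁻¹,1}` then
`w = w₀ w₁^{1-p} ∈ 𝒜_{A,p}`. -/
theorem memAp_factorization (n : ℕ) (hn : 0 < n) (p : ℝ) (hp : 1 < p)
    (A : Matrix (Fin n) (Fin n) ℝ) (hA : A.det ≠ 0)
    (w0 w1 : (Fin n → ℝ) → ℝ)
    (hw0 : ∀ x, 0 ≤ w0 x) (hw0l : LocallyIntegrable w0 volume)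
    (hw1 : ∀ x, 0 ≤ w1 x) (hw1l : LocallyIntegrable w1 volume)
    (hmem0 : MemAp A 1 w0) (hmem1 : MemAp A⁻¹ 1 w1) :
    MemAp A p (fun x => w0 x * w1 x ^ (1 - p)) :=
  memAp_factorization_general n p hp A hA w0 w1 hw0 hw0l hw1 hw1l hmem0 hmem1

end Paper
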